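/- Let 0 < ρ < 1, let A = {x ∈ ℝ² : ρ < ‖x‖ < 1}, and let ν > 0. Let α₁, α₂ : (0,∞) → ℝ be continuously differentiable and let s : (0,∞) × [ρ,1] → ℝ be such that u(t,x) := s(t,‖x‖)·x^⊥, together with its first t-derivative and first, second, and third x-derivatives, is continuous on (0,∞) × Ā, u satisfies ∂_t u = ν·Δu on (0,∞) × A, and u(t,x) = (α₁(t)/(2π))·x^⊥ for ‖x‖ = 1 and u(t,x) = (α₂(t)/(2π))·x^⊥ for ‖x‖ = ρ. Let ω := rot u. Then for every t > 0: (x/‖x‖)·∇ω(t,x) = ‖x‖·α₁'(t)/(2πν) when ‖x‖ = 1, and (x/‖x‖)·∇ω(t,x) = ‖x‖·α₂'(t)/(2πν) when ‖x‖ = ρ. -/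

import Mathlib

/-!
The field `u = s(t,‖x‖) x^⊥` is orthogonal to the radius and commutes with rotations, so it is
divergence free on the closed annulus; as the closed annulus is a set of unique differentiability,
`∇ div u = 0` there as well. In the plane `Δu = ∇ div u + (∇ω)^⊥`, and on a boundary circle the heat
equation, extended to the boundary by continuity, gives `ν Δu = ∂ₜu = (α'/2π) x^⊥`. Hence
`∇ω = (α'/(2πν)) x`, whose radial component is `‖x‖ α'/(2πν)`.
-/

open Metric Set MeasureTheory Filter Real
open scoped RealInnerProductSpace MeasureTheory

set_option maxSynthPendingDepth 3
set_option synthInstance.maxHeartbeats 1000000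
set_option maxHeartbeats 1000000

noncomputable section

/-- The plane `ℝ²`, as a Euclidean space. -/
abbrev E2 := EuclideanSpace ℝ (Fin 2)

/-- Counterclockwise rotation of `x` by `90°`:  `x^⊥ = (-x₂, x₁)`. -/
def perp (x : E2) : E2 := WithLp.toLp 2 ![-(x 1), x 0]

open scoped Topology

section Annulus

variable {E : Type*} [NormedAddCommGroup E] [NormedSpace ℝ E] {a b : ℝ}

/-- The disk of radius `(b - a) / 2` centred on the middle circle, on the ray through `y`. -/
lemma exists_closedBall_subset_annulus (ha : 0 < a) {y : E}
    (hy : y ∈ closedBall (0 : E) b \ ball 0 a) :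
    ∃ m : E, y ∈ closedBall m ((b - a) / 2) ∧
      closedBall m ((b - a) / 2) ⊆ closedBall 0 b \ ball 0 a ∧
      ball m ((b - a) / 2) ⊆ ball 0 b \ closedBall 0 a := by
  simp only [Set.mem_sdiff, mem_closedBall, mem_ball, dist_zero_right, not_lt] at hy
  have hy0 : 0 < ‖y‖ := ha.trans_le hy.2
  set m : E := ((a + b) / (2 * ‖y‖)) • y
  have hm : ‖m‖ = (a + b) / 2 := by
    rw [norm_smul, Real.norm_of_nonneg (div_nonneg (by linarith) (by positivity))]
    field_simp
  have hym : dist y m = |‖y‖ - (a + b) / 2| := by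
    have h : (1 - (a + b) / (2 * ‖y‖)) * ‖y‖ = ‖y‖ - (a + b) / 2 := by field_simp
    rw [dist_eq_norm, ← one_smul ℝ y, ← sub_smul, one_smul, norm_smul, Real.norm_eq_abs, ← h,
      abs_mul, abs_norm]
  refine ⟨m, ?_, fun z hz => ?_, fun z hz => ?_⟩
  · rw [mem_closedBall, hym, abs_le]
    constructor <;> linarith
  · rw [mem_closedBall, dist_eq_norm] at hz
    simp only [Set.mem_sdiff, mem_closedBall, mem_ball, dist_zero_right, not_lt]
    constructor
    · linarith [norm_le_norm_add_norm_sub' z m]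
    · linarith [norm_sub_norm_le m z, norm_sub_rev m z]
  · rw [mem_ball, dist_eq_norm] at hz
    simp only [Set.mem_sdiff, mem_closedBall, mem_ball, dist_zero_right, not_le]
    constructor
    · linarith [norm_le_norm_add_norm_sub' z m]
    · linarith [norm_sub_norm_le m z, norm_sub_rev m z]

lemma closedAnnulus_subset_closure_openAnnulus (ha : 0 < a) (hab : a < b) :
    closedBall (0 : E) b \ ball 0 a ⊆ closure (ball 0 b \ closedBall 0 a) := by
  intro y hy
  obtain ⟨m, hym, -, hball⟩ := exists_closedBall_subset_annulus ha hy
  rw [← closure_ball m (by linarith)] at hym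
  exact closure_mono hball hym

lemma uniqueDiffOn_closedAnnulus (ha : 0 < a) (hab : a < b) :
    UniqueDiffOn ℝ (closedBall (0 : E) b \ ball 0 a) := by
  intro y hy
  obtain ⟨m, hym, hsub, -⟩ := exists_closedBall_subset_annulus ha hy
  have hint : (interior (closedBall m ((b - a) / 2))).Nonempty :=
    ⟨m, mem_interior_iff_mem_nhds.mpr (closedBall_mem_nhds m (by linarith))⟩
  exact (uniqueDiffWithinAt_convex (convex_closedBall m _) hint (subset_closure hym)).mono hsub

end Annulus

lemma second_derivative_symmetric_of_subset_closure {E F : Type*} [NormedAddCommGroup E]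
    [NormedSpace ℝ E] [NormedAddCommGroup F] [NormedSpace ℝ F] {s t : Set E} {f : E → F}
    {f' : E → E →L[ℝ] F} {f'' : E → E →L[ℝ] E →L[ℝ] F} (ht : IsOpen t) (hts : t ⊆ s)
    (hst : s ⊆ closure t) (hf : ∀ y ∈ s, HasFDerivWithinAt f (f' y) s y)
    (hf' : ∀ y ∈ s, HasFDerivWithinAt f' (f'' y) s y) (hc : ContinuousOn f'' s) (v w : E) :
    EqOn (fun y => f'' y v w) (fun y => f'' y w v) s := by
  refine EqOn.of_subset_closure (fun y hy => ?_) (by fun_prop) (by fun_prop) hts hst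
  have hs : ∀ z ∈ t, s ∈ 𝓝 z := fun z hz => mem_of_superset (ht.mem_nhds hz) hts
  refine second_derivative_symmetric_of_eventually (f := f) ?_
    ((hf' y (hts hy)).hasFDerivAt (hs y hy)) v w
  filter_upwards [ht.mem_nhds hy] with z hz
  exact (hf z (hts hz)).hasFDerivAt (hs z hz)

/-- Differentiating `⟪f z, z⟫ = 0` at `y` in the direction `y` gives `⟪L y, y⟫ = -⟪f y, y⟫`. -/
lemma HasFDerivWithinAt.inner_apply_self_eq_zero {F : Type*} [NormedAddCommGroup F]
    [InnerProductSpace ℝ F] {f : F → F} {L : F →L[ℝ] F} {S : Set F} {y : F}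
    (hf : HasFDerivWithinAt f L S y) (hS : UniqueDiffWithinAt ℝ S y) (hy : y ∈ S)
    (htan : ∀ z ∈ S, ⟪f z, z⟫ = 0) : ⟪L y, y⟫ = 0 := by
  have hzero : HasFDerivWithinAt (fun z => ⟪f z, z⟫) (0 : F →L[ℝ] ℝ) S y :=
    (hasFDerivWithinAt_const 0 y S).congr htan (htan y hy)
  have h := congrArg (fun Λ : F →L[ℝ] ℝ => Λ y)
    (hS.eq (hf.inner ℝ (hasFDerivWithinAt_id y S)) hzero)
  simp only [ContinuousLinearMap.comp_apply, ContinuousLinearMap.prod_apply,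
    fderivInnerCLM_apply, ContinuousLinearMap.coe_id', id_eq, zero_apply] at h
  rwa [htan y hy, zero_add] at h

local notation "e₀" => EuclideanSpace.single (0 : Fin 2) (1 : ℝ)
local notation "e₁" => EuclideanSpace.single (1 : Fin 2) (1 : ℝ)

lemma E2.eq_single_add_single (y : E2) : y = y 0 • e₀ + y 1 • e₁ := by
  ext i; fin_cases i <;> simp

lemma E2.map_eq_smul_add_smul {M F : Type*} [AddCommGroup F] [Module ℝ F] [FunLike M E2 F]
    [LinearMapClass M ℝ E2 F] (L : M) (y : E2) :
    L y = y 0 • L e₀ + y 1 • L e₁ := by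
  conv_lhs => rw [E2.eq_single_add_single y]
  rw [map_add, map_smul, map_smul]

lemma E2.inner_eq (a b : E2) : ⟪a, b⟫ = a 0 * b 0 + a 1 * b 1 := by
  simp [PiLp.inner_apply, Fin.sum_univ_two, mul_comm]

lemma E2.norm_sq_eq (a : E2) : ‖a‖ ^ 2 = a 0 ^ 2 + a 1 ^ 2 := by
  simp [EuclideanSpace.norm_sq_eq, Fin.sum_univ_two]

@[simp] lemma perp_apply_zero (x : E2) : perp x 0 = -x 1 := rfl

@[simp] lemma perp_apply_one (x : E2) : perp x 1 = x 0 := rfl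

lemma perp_smul (c : ℝ) (x : E2) : perp (c • x) = c • perp x := by
  ext i; fin_cases i <;> simp

lemma perp_add (x y : E2) : perp (x + y) = perp x + perp y := by
  ext i; fin_cases i <;> simp [add_comm]

lemma perp_perp (x : E2) : perp (perp x) = -x := by
  ext i; fin_cases i <;> simp

lemma inner_perp_self (x : E2) : ⟪perp x, x⟫ = 0 := by
  simp only [E2.inner_eq, perp_apply_zero, perp_apply_one]; ring

lemma inner_perp_perp (x y : E2) : ⟪perp x, perp y⟫ = ⟪x, y⟫ := by
  simp only [E2.inner_eq, perp_apply_zero, perp_apply_one]; ring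

def planeRotation (θ : ℝ) (x : E2) : E2 := cos θ • x + sin θ • perp x

lemma planeRotation_zero (x : E2) : planeRotation 0 x = x := by
  simp [planeRotation]

lemma planeRotation_smul (θ c : ℝ) (x : E2) :
    planeRotation θ (c • x) = c • planeRotation θ x := by
  simp only [planeRotation, perp_smul, smul_add, smul_comm c]

lemma perp_planeRotation (θ : ℝ) (x : E2) :
    perp (planeRotation θ x) = planeRotation θ (perp x) := by
  simp only [planeRotation, perp_add, perp_smul, perp_perp, smul_neg]

lemma norm_planeRotation (θ : ℝ) (x : E2) : ‖planeRotation θ x‖ = ‖x‖ := by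
  rw [← sq_eq_sq₀ (norm_nonneg _) (norm_nonneg _), E2.norm_sq_eq, E2.norm_sq_eq]
  simp only [planeRotation, PiLp.add_apply, PiLp.smul_apply, smul_eq_mul, perp_apply_zero,
    perp_apply_one]
  linear_combination (x 0 ^ 2 + x 1 ^ 2) * sin_sq_add_cos_sq θ

lemma hasDerivAt_planeRotation (x : E2) :
    HasDerivAt (fun θ => planeRotation θ x) (perp x) 0 := by
  have h := ((hasDerivAt_cos 0).smul_const x).add ((hasDerivAt_sin 0).smul_const (perp x))
  simp only [cos_zero, sin_zero, neg_zero, zero_smul, one_smul, zero_add] at h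
  exact h

/-- Applied to a Jacobian, this is the divergence. -/
def planeTrace : (E2 →L[ℝ] E2) →L[ℝ] ℝ :=
  (EuclideanSpace.proj 0).comp (ContinuousLinearMap.apply ℝ E2 e₀) +
    (EuclideanSpace.proj 1).comp (ContinuousLinearMap.apply ℝ E2 e₁)

lemma planeTrace_apply (L : E2 →L[ℝ] E2) : planeTrace L = L e₀ 0 + L e₁ 1 := rfl

/-- The trace computed in the orthogonal basis `y, y^⊥`. -/
lemma sq_norm_mul_planeTrace (L : E2 →L[ℝ] E2) (y : E2) :
    ‖y‖ ^ 2 * planeTrace L = ⟪L y, y⟫ + ⟪L (perp y), perp y⟫ := by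
  rw [E2.map_eq_smul_add_smul L y, E2.map_eq_smul_add_smul L (perp y), E2.inner_eq, E2.inner_eq,
    planeTrace_apply, E2.norm_sq_eq]
  simp only [PiLp.add_apply, PiLp.smul_apply, smul_eq_mul, perp_apply_zero, perp_apply_one]
  ring

lemma HasFDerivWithinAt.apply_perp_eq_perp {f : E2 → E2} {L : E2 →L[ℝ] E2} {S : Set E2}
    {y : E2} (hf : HasFDerivWithinAt f L S y) (hS : ∀ θ, planeRotation θ y ∈ S)
    (hequiv : ∀ θ, f (planeRotation θ y) = planeRotation θ (f y)) :
    L (perp y) = perp (f y) := by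
  have hchain : HasDerivAt (fun θ => f (planeRotation θ y)) (L (perp y)) 0 := by
    rw [← hasDerivWithinAt_univ]
    exact hf.comp_hasDerivWithinAt_of_eq 0 (hasDerivAt_planeRotation y).hasDerivWithinAt
      (fun θ _ => hS θ) (planeRotation_zero y).symm
  rw [funext hequiv] at hchain
  exact hchain.unique (hasDerivAt_planeRotation (f y))

/-- Such a field is orthogonal to the radius and commutes with rotations. -/
lemma planeTrace_eq_zero_of_eq_smul_perp {S : Set E2} (hS : UniqueDiffOn ℝ S)
    (hrot : ∀ θ, ∀ y ∈ S, planeRotation θ y ∈ S) (h0 : (0 : E2) ∉ S) {s : ℝ → ℝ}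
    {f : E2 → E2} {f' : E2 → E2 →L[ℝ] E2} (hfs : ∀ y ∈ S, f y = s ‖y‖ • perp y)
    (hf : ∀ y ∈ S, HasFDerivWithinAt f (f' y) S y) {y : E2} (hy : y ∈ S) :
    planeTrace (f' y) = 0 := by
  have htan : ∀ z ∈ S, ⟪f z, z⟫ = 0 := fun z hz => by
    rw [hfs z hz, real_inner_smul_left, inner_perp_self, mul_zero]
  have hrad : ⟪f' y y, y⟫ = 0 := (hf y hy).inner_apply_self_eq_zero (hS y hy) hy htan
  have hperp : f' y (perp y) = perp (f y) :=
    (hf y hy).apply_perp_eq_perp (fun θ => hrot θ y hy) fun θ => by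
      rw [hfs _ (hrot θ y hy), hfs y hy, norm_planeRotation, perp_planeRotation,
        planeRotation_smul]
  have hy0 : ‖y‖ ^ 2 ≠ 0 := by
    have : y ≠ 0 := fun h => h0 (h ▸ hy)
    positivity
  have := sq_norm_mul_planeTrace (f' y) y
  rw [hrad, hperp, inner_perp_perp, htan y hy, add_zero] at this
  exact (mul_eq_zero.mp this).resolve_left hy0

/-- `B` plays the role of `D²u(x)`; the identity behind this is `Δu = ∇(div u) + (∇ rot u)^⊥`
in the plane. -/
lemma rot_deriv_eq_of_laplacian_eq_smul_perp {B : E2 →L[ℝ] E2 →L[ℝ] E2} {c : ℝ} {x : E2}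
    (hsym : B e₀ e₁ = B e₁ e₀) (hdiv : planeTrace ∘L B = 0)
    (hlap : B e₀ e₀ + B e₁ e₁ = c • perp x) (v : E2) :
    B v e₀ 1 - B v e₁ 0 = c * ⟪v, x⟫ := by
  have hd₀ := congrArg (fun Λ : E2 →L[ℝ] ℝ => Λ e₀) hdiv
  have hd₁ := congrArg (fun Λ : E2 →L[ℝ] ℝ => Λ e₁) hdiv
  have hl₀ := congrArg (fun w : E2 => w 0) hlap
  have hl₁ := congrArg (fun w : E2 => w 1) hlap
  have hs₀ := congrArg (fun w : E2 => w 0) hsym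
  have hs₁ := congrArg (fun w : E2 => w 1) hsym
  simp only [ContinuousLinearMap.comp_apply, planeTrace_apply, zero_apply] at hd₀ hd₁
  simp only [PiLp.add_apply, PiLp.smul_apply, smul_eq_mul, perp_apply_zero, perp_apply_one]
    at hl₀ hl₁
  rw [E2.map_eq_smul_add_smul B v, E2.inner_eq]
  simp only [add_apply, smul_apply, PiLp.add_apply, PiLp.smul_apply, smul_eq_mul]
  linear_combination v 0 * (hl₁ - hd₁ - hs₀) + v 1 * (-hs₁ - hl₀ + hd₀)

lemma radial_rot_deriv_eq_of_heat {a b ν c : ℝ} (ha : 0 < a) (hab : a < b) (hν : ν ≠ 0)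
    {s : ℝ → ℝ} {f g : E2 → E2} {Df : E2 → E2 →L[ℝ] E2}
    {D2f : E2 → E2 →L[ℝ] E2 →L[ℝ] E2}
    (hfs : ∀ y ∈ closedBall (0 : E2) b \ ball 0 a, f y = s ‖y‖ • perp y)
    (hDf : ∀ y ∈ closedBall (0 : E2) b \ ball 0 a,
      HasFDerivWithinAt f (Df y) (closedBall 0 b \ ball 0 a) y)
    (hD2f : ∀ y ∈ closedBall (0 : E2) b \ ball 0 a,
      HasFDerivWithinAt Df (D2f y) (closedBall 0 b \ ball 0 a) y)
    (hD2fc : ContinuousOn D2f (closedBall 0 b \ ball 0 a))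
    (hgc : ContinuousOn g (closedBall 0 b \ ball 0 a))
    (hheat : ∀ y ∈ ball (0 : E2) b \ closedBall 0 a, g y = ν • (D2f y e₀ e₀ + D2f y e₁ e₁))
    {x : E2} (hx : x ∈ closedBall (0 : E2) b \ ball 0 a) (hgx : g x = c • perp x) :
    D2f x (‖x‖⁻¹ • x) e₀ 1 - D2f x (‖x‖⁻¹ • x) e₁ 0 = ‖x‖ * c / ν := by
  set S := closedBall (0 : E2) b \ ball 0 a
  have hAS : ball (0 : E2) b \ closedBall 0 a ⊆ S :=
    sdiff_subset_sdiff ball_subset_closedBall ball_subset_closedBall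
  have hSA := closedAnnulus_subset_closure_openAnnulus (E := E2) ha hab
  have hS : UniqueDiffOn ℝ S := uniqueDiffOn_closedAnnulus ha hab
  have hsym : D2f x e₀ e₁ = D2f x e₁ e₀ :=
    second_derivative_symmetric_of_subset_closure (isOpen_ball.sdiff isClosed_closedBall) hAS
      hSA hDf hD2f hD2fc e₀ e₁ hx
  have hlap : D2f x e₀ e₀ + D2f x e₁ e₁ = (c / ν) • perp x := by
    have h := EqOn.of_subset_closure (fun y hy => (hheat y hy).symm) (by fun_prop) hgc hAS hSA hx
    rw [div_eq_inv_mul, ← smul_smul, ← hgx, ← h, smul_smul, inv_mul_cancel₀ hν, one_smul]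
  have hdiv : planeTrace ∘L D2f x = 0 := by
    have hzero : ∀ y ∈ S, planeTrace (Df y) = 0 := fun y hy =>
      planeTrace_eq_zero_of_eq_smul_perp hS
        (fun θ z hz => by
          simpa only [S, Set.mem_sdiff, mem_closedBall, mem_ball, dist_zero_right,
            norm_planeRotation] using hz)
        (fun h0 => h0.2 (mem_ball_self ha)) hfs hDf hy
    exact (hS x hx).eq (planeTrace.hasFDerivAt.comp_hasFDerivWithinAt x (hD2f x hx))
      ((hasFDerivWithinAt_const 0 x S).congr hzero (hzero x hx))
  rw [rot_deriv_eq_of_laplacian_eq_smul_perp hsym hdiv hlap, real_inner_smul_left,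
    real_inner_self_eq_norm_sq]
  have hx0 : ‖x‖ ≠ 0 := (ha.trans_le (by simpa [S] using hx.2)).ne'
  field_simp

theorem stmt19_general (ρ ν : ℝ) (hρ : 0 < ρ) (hρ1 : ρ < 1) (hν : 0 < ν)
    (α₁ α₂ α₁' α₂' : ℝ → ℝ)
    (hα₁ : ∀ t ∈ Ioi (0:ℝ), HasDerivAt α₁ (α₁' t) t)
    (hα₂ : ∀ t ∈ Ioi (0:ℝ), HasDerivAt α₂ (α₂' t) t)
    (s : ℝ → ℝ → ℝ) (u : ℝ → E2 → E2)
    (hudef : ∀ t ∈ Ioi (0:ℝ), ∀ x ∈ closedBall (0:E2) 1 \ ball 0 ρ,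
      u t x = s t ‖x‖ • perp x)
    (ut : ℝ → E2 → E2)
    (Du : ℝ → E2 → (E2 →L[ℝ] E2)) (D2u : ℝ → E2 → (E2 →L[ℝ] E2 →L[ℝ] E2))
    (hut : ∀ t ∈ Ioi (0:ℝ), ∀ x ∈ closedBall (0:E2) 1 \ ball 0 ρ,
      HasDerivAt (fun τ => u τ x) (ut t x) t)
    (hutc : ContinuousOn (fun p : ℝ × E2 => ut p.1 p.2)
      (Ioi 0 ×ˢ (closedBall 0 1 \ ball 0 ρ)))
    (hDu : ∀ t ∈ Ioi (0:ℝ), ∀ x ∈ closedBall (0:E2) 1 \ ball 0 ρ,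
      HasFDerivWithinAt (u t) (Du t x) (closedBall 0 1 \ ball 0 ρ) x)
    (hD2u : ∀ t ∈ Ioi (0:ℝ), ∀ x ∈ closedBall (0:E2) 1 \ ball 0 ρ,
      HasFDerivWithinAt (Du t) (D2u t x) (closedBall 0 1 \ ball 0 ρ) x)
    (hD2uc : ContinuousOn (fun p : ℝ × E2 => D2u p.1 p.2)
      (Ioi 0 ×ˢ (closedBall 0 1 \ ball 0 ρ)))
    (hheat : ∀ t ∈ Ioi (0:ℝ), ∀ x ∈ ball (0:E2) 1 \ closedBall 0 ρ,
      ut t x = ν • (D2u t x (EuclideanSpace.single 0 1) (EuclideanSpace.single 0 1)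
        + D2u t x (EuclideanSpace.single 1 1) (EuclideanSpace.single 1 1)))
    (hb1 : ∀ t ∈ Ioi (0:ℝ), ∀ x : E2, ‖x‖ = 1 → u t x = (α₁ t / (2 * π)) • perp x)
    (hb2 : ∀ t ∈ Ioi (0:ℝ), ∀ x : E2, ‖x‖ = ρ → u t x = (α₂ t / (2 * π)) • perp x) :
    ∀ t ∈ Ioi (0:ℝ), ∀ x : E2,
      (‖x‖ = 1 →
        D2u t x (‖x‖⁻¹ • x) (EuclideanSpace.single 0 1) 1
          - D2u t x (‖x‖⁻¹ • x) (EuclideanSpace.single 1 1) 0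
        = ‖x‖ * α₁' t / (2 * π * ν))
      ∧ (‖x‖ = ρ →
        D2u t x (‖x‖⁻¹ • x) (EuclideanSpace.single 0 1) 1
          - D2u t x (‖x‖⁻¹ • x) (EuclideanSpace.single 1 1) 0
        = ‖x‖ * α₂' t / (2 * π * ν)) := by
  intro t ht x
  have onCircle : ∀ (α α' : ℝ → ℝ) (r : ℝ), ρ ≤ r → r ≤ 1 →
      (∀ t ∈ Ioi (0 : ℝ), HasDerivAt α (α' t) t) →
      (∀ t ∈ Ioi (0 : ℝ), ∀ x : E2, ‖x‖ = r → u t x = (α t / (2 * π)) • perp x) → ‖x‖ = r →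
      D2u t x (‖x‖⁻¹ • x) e₀ 1 - D2u t x (‖x‖⁻¹ • x) e₁ 0 = ‖x‖ * α' t / (2 * π * ν) := by
    intro α α' r hρr hr1 hα hb hx
    have hxS : x ∈ closedBall (0 : E2) 1 \ ball 0 ρ := by
      simp [Set.mem_sdiff, hx, hρr, hr1]
    have hutx : ut t x = (α' t / (2 * π)) • perp x := by
      refine (hut t ht x hxS).unique
        ((((hα t ht).div_const _).smul_const (perp x)).congr_of_eventuallyEq ?_)
      filter_upwards [isOpen_Ioi.mem_nhds ht] with τ hτ using hb τ hτ x hx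
    rw [radial_rot_deriv_eq_of_heat hρ hρ1 hν.ne' (hudef t ht) (hDu t ht) (hD2u t ht)
      (ContinuousOn.uncurry_left (f := D2u) t ht hD2uc)
      (ContinuousOn.uncurry_left (f := ut) t ht hutc) (hheat t ht) hxS hutx]
    ring
  exact ⟨onCircle α₁ α₁' 1 hρ1.le le_rfl hα₁ hb1, onCircle α₂ α₂' ρ le_rfl hρ1.le hα₂ hb2⟩

/-- Boundary vorticity production for circularly symmetric heat flow on the annulus
`A = {ρ < ‖x‖ < 1}` whose boundary circles rotate with angular velocities `α₁, α₂`: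
if `u(t,x) = s(t,‖x‖) • x^⊥` (with `u`, `∂_t u`, and the first, second and third
space derivatives continuous on `(0,∞) × Ā`) solves `∂_t u = ν Δu` on `(0,∞) × A`
with `u = (α₁(t)/(2π)) • x^⊥` on `‖x‖ = 1` and `u = (α₂(t)/(2π)) • x^⊥` on `‖x‖ = ρ`,
then the radial derivative of the vorticity `ω = rot u` satisfies
`(x/‖x‖) ⬝ ∇ω(t,x) = ‖x‖ α₁'(t)/(2πν)` on `‖x‖ = 1` and
`(x/‖x‖) ⬝ ∇ω(t,x) = ‖x‖ α₂'(t)/(2πν)` on `‖x‖ = ρ`. -/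
theorem stmt19 (ρ ν : ℝ) (hρ : 0 < ρ) (hρ1 : ρ < 1) (hν : 0 < ν)
    (α₁ α₂ α₁' α₂' : ℝ → ℝ)
    (hα₁ : ∀ t ∈ Ioi (0:ℝ), HasDerivAt α₁ (α₁' t) t)
    (hα₁c : ContinuousOn α₁' (Ioi 0))
    (hα₂ : ∀ t ∈ Ioi (0:ℝ), HasDerivAt α₂ (α₂' t) t)
    (hα₂c : ContinuousOn α₂' (Ioi 0))
    (s : ℝ → ℝ → ℝ) (u : ℝ → E2 → E2)
    (hudef : ∀ t ∈ Ioi (0:ℝ), ∀ x ∈ closedBall (0:E2) 1 \ ball 0 ρ,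
      u t x = s t ‖x‖ • perp x)
    (ut : ℝ → E2 → E2)
    (Du : ℝ → E2 → (E2 →L[ℝ] E2)) (D2u : ℝ → E2 → (E2 →L[ℝ] E2 →L[ℝ] E2))
    (D3u : ℝ → E2 → (E2 →L[ℝ] E2 →L[ℝ] E2 →L[ℝ] E2))
    (hcont : ContinuousOn (fun p : ℝ × E2 => u p.1 p.2)
      (Ioi 0 ×ˢ (closedBall 0 1 \ ball 0 ρ)))
    (hut : ∀ t ∈ Ioi (0:ℝ), ∀ x ∈ closedBall (0:E2) 1 \ ball 0 ρ,
      HasDerivAt (fun τ => u τ x) (ut t x) t)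
    (hutc : ContinuousOn (fun p : ℝ × E2 => ut p.1 p.2)
      (Ioi 0 ×ˢ (closedBall 0 1 \ ball 0 ρ)))
    (hDu : ∀ t ∈ Ioi (0:ℝ), ∀ x ∈ closedBall (0:E2) 1 \ ball 0 ρ,
      HasFDerivWithinAt (u t) (Du t x) (closedBall 0 1 \ ball 0 ρ) x)
    (hDuc : ContinuousOn (fun p : ℝ × E2 => Du p.1 p.2)
      (Ioi 0 ×ˢ (closedBall 0 1 \ ball 0 ρ)))
    (hD2u : ∀ t ∈ Ioi (0:ℝ), ∀ x ∈ closedBall (0:E2) 1 \ ball 0 ρ,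
      HasFDerivWithinAt (Du t) (D2u t x) (closedBall 0 1 \ ball 0 ρ) x)
    (hD2uc : ContinuousOn (fun p : ℝ × E2 => D2u p.1 p.2)
      (Ioi 0 ×ˢ (closedBall 0 1 \ ball 0 ρ)))
    (hD3u : ∀ t ∈ Ioi (0:ℝ), ∀ x ∈ closedBall (0:E2) 1 \ ball 0 ρ,
      HasFDerivWithinAt (D2u t) (D3u t x) (closedBall 0 1 \ ball 0 ρ) x)
    (hD3uc : ContinuousOn (fun p : ℝ × E2 => D3u p.1 p.2)
      (Ioi 0 ×ˢ (closedBall 0 1 \ ball 0 ρ)))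
    (hheat : ∀ t ∈ Ioi (0:ℝ), ∀ x ∈ ball (0:E2) 1 \ closedBall 0 ρ,
      ut t x = ν • (D2u t x (EuclideanSpace.single 0 1) (EuclideanSpace.single 0 1)
        + D2u t x (EuclideanSpace.single 1 1) (EuclideanSpace.single 1 1)))
    (hb1 : ∀ t ∈ Ioi (0:ℝ), ∀ x : E2, ‖x‖ = 1 → u t x = (α₁ t / (2 * π)) • perp x)
    (hb2 : ∀ t ∈ Ioi (0:ℝ), ∀ x : E2, ‖x‖ = ρ → u t x = (α₂ t / (2 * π)) • perp x) :
    ∀ t ∈ Ioi (0:ℝ), ∀ x : E2,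
      (‖x‖ = 1 →
        D2u t x (‖x‖⁻¹ • x) (EuclideanSpace.single 0 1) 1
          - D2u t x (‖x‖⁻¹ • x) (EuclideanSpace.single 1 1) 0
        = ‖x‖ * α₁' t / (2 * π * ν))
      ∧ (‖x‖ = ρ →
        D2u t x (‖x‖⁻¹ • x) (EuclideanSpace.single 0 1) 1
          - D2u t x (‖x‖⁻¹ • x) (EuclideanSpace.single 1 1) 0
        = ‖x‖ * α₂' t / (2 * π * ν)) :=
  stmt19_general ρ ν hρ hρ1 hν α₁ α₂ α₁' α₂' hα₁ hα₂ s u hudef ut Du D2u hut hutc hDu hD2u hD2uc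
    hheat hb1 hb2
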